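/- arXiv:1309.6978 — 2 statements merged into one kernel-verified Lean document; each statement's English description precedes it below -/
import Mathlib

section
/- For all n ≥ 2, the sum E = n(n-1)·∑_{i=0}^{n-1} 1/(n(n-1) - i(i-1)) satisfies E ≤ n·(H_{2n} + 1) and E ≥ ((n-1)/2)·(H_{2n-2} - 1), where H_k is the k-th harmonic number. Hence E = Θ(n log n). -/
/-- The `k`-th harmonic number `H_k = ∑_{j=1}^{k} 1/j`. -/
noncomputable def harmonicR (k : ℕ) : ℝ := ∑ j ∈ Finset.range k, (1 : ℝ) / (j + 1)

lemma harmonicR_nonneg (k : ℕ) : 0 ≤ harmonicR k := by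
  apply Finset.sum_nonneg; intro j _; positivity

lemma harmonicR_mono : Monotone harmonicR := by
  intro a b hab
  apply Finset.sum_le_sum_of_subset_of_nonneg (Finset.range_subset_range.2 hab)
  intro j _ _; positivity

lemma sumA (n : ℕ) :
    ∑ i ∈ Finset.range n, (1:ℝ) / ((n:ℝ) - i) = harmonicR n := by
  rw [harmonicR, ← Finset.sum_range_reflect (fun j => (1:ℝ)/(j+1)) n]
  apply Finset.sum_congr rfl
  intro j hj
  rw [Finset.mem_range] at hj
  have h1 : j ≤ n - 1 := by omega
  have h2 : 1 ≤ n := by omega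
  have : ((n - 1 - j : ℕ) : ℝ) = (n:ℝ) - 1 - j := by
    push_cast [Nat.cast_sub h1, Nat.cast_sub h2]; ring
  rw [this]; ring_nf

lemma sumB (n : ℕ) (hn : 2 ≤ n) :
    ∑ i ∈ Finset.range n, (1:ℝ) / ((n:ℝ) + i - 1)
      = harmonicR (2*n - 2) - harmonicR (n - 2) := by
  rw [harmonicR, harmonicR, ← Finset.sum_Ico_eq_sub _ (by omega : n - 2 ≤ 2*n - 2)]
  rw [Finset.sum_Ico_eq_sum_range]
  have hcard : 2*n - 2 - (n - 2) = n := by omega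
  rw [hcard]
  apply Finset.sum_congr rfl
  intro i _
  have : ((n - 2 + i : ℕ) : ℝ) = (n:ℝ) - 2 + i := by
    push_cast [Nat.cast_sub (by omega : 2 ≤ n)]; ring
  rw [this]; ring_nf

/-- For all `n ≥ 2`, the expected time `E = n(n-1)·∑_{i=0}^{n-1} 1/(n(n-1)-i(i-1))`
of the one-to-all elimination process satisfies `E ≤ n(H_{2n}+1)` and
`E ≥ ((n-1)/2)(H_{2n-2}-1)` (hence `E = Θ(n log n)`). -/
theorem one_to_all_elimination_expected_time (n : ℕ) (hn : 2 ≤ n) :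
    (n : ℝ) * ((n : ℝ) - 1) *
        ∑ i ∈ Finset.range n, 1 / ((n : ℝ) * ((n : ℝ) - 1) - (i : ℝ) * ((i : ℝ) - 1))
      ≤ (n : ℝ) * (harmonicR (2 * n) + 1) ∧
    ((n : ℝ) - 1) / 2 * (harmonicR (2 * n - 2) - 1) ≤
      (n : ℝ) * ((n : ℝ) - 1) *
        ∑ i ∈ Finset.range n, 1 / ((n : ℝ) * ((n : ℝ) - 1) - (i : ℝ) * ((i : ℝ) - 1)) := by
  have hn2 : (2:ℝ) ≤ (n:ℝ) := by exact_mod_cast hn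
  have key : ∀ i ∈ Finset.range n,
      (0:ℝ) < (n:ℝ) - i ∧ (0:ℝ) < (n:ℝ) + i - 1 ∧
      (n:ℝ) * ((n:ℝ) - 1) - (i:ℝ) * ((i:ℝ) - 1) = ((n:ℝ) - i) * ((n:ℝ) + i - 1) := by
    intro i hi
    rw [Finset.mem_range] at hi
    have hi' : (i:ℝ) ≤ (n:ℝ) - 1 := by
      have : (i:ℝ) + 1 ≤ (n:ℝ) := by exact_mod_cast hi
      linarith
    have hi0 : (0:ℝ) ≤ (i:ℝ) := Nat.cast_nonneg i
    exact ⟨by linarith, by linarith, by ring⟩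
  rw [Finset.mul_sum]
  constructor
  · -- upper bound
    calc ∑ i ∈ Finset.range n,
          (n:ℝ) * ((n:ℝ) - 1) * (1 / ((n:ℝ) * ((n:ℝ) - 1) - (i:ℝ) * ((i:ℝ) - 1)))
        ≤ ∑ i ∈ Finset.range n, (n:ℝ) * ((1:ℝ) / ((n:ℝ) - i)) := by
          apply Finset.sum_le_sum
          intro i hi
          obtain ⟨hx, hy, hD⟩ := key i hi
          rw [hD, mul_one_div, mul_one_div, div_le_div_iff₀ (by positivity) hx]
          nlinarith [mul_nonneg (mul_nonneg (by positivity : (0:ℝ) ≤ (n:ℝ)) hx.le)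
            (Nat.cast_nonneg (α := ℝ) i)]
      _ = (n:ℝ) * harmonicR n := by rw [← Finset.mul_sum, sumA]
      _ ≤ (n:ℝ) * (harmonicR (2*n) + 1) := by
          apply mul_le_mul_of_nonneg_left _ (by positivity)
          have := harmonicR_mono (by omega : n ≤ 2*n)
          linarith
  · -- lower bound
    calc ((n:ℝ) - 1) / 2 * (harmonicR (2*n - 2) - 1)
        ≤ ((n:ℝ) - 1) / 2 *
            ((harmonicR (2*n - 2) - harmonicR (n - 2)) + harmonicR n) := by
          apply mul_le_mul_of_nonneg_left _ (by linarith)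
          have := harmonicR_mono (by omega : n - 2 ≤ n)
          linarith
      _ = ∑ i ∈ Finset.range n,
            ((n:ℝ) - 1) / 2 * ((1:ℝ) / ((n:ℝ) + i - 1) + (1:ℝ) / ((n:ℝ) - i)) := by
          rw [← Finset.mul_sum, Finset.sum_add_distrib, sumA, sumB n hn]
      _ ≤ ∑ i ∈ Finset.range n,
            (n:ℝ) * ((n:ℝ) - 1) * (1 / ((n:ℝ) * ((n:ℝ) - 1) - (i:ℝ) * ((i:ℝ) - 1))) := by
          apply Finset.sum_le_sum
          intro i hi
          obtain ⟨hx, hy, hD⟩ := key i hi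
          rw [hD, mul_one_div, div_add_div _ _ (ne_of_gt hy) (ne_of_gt hx),
            div_mul_div_comm, div_le_div_iff₀ (by positivity) (by positivity)]
          nlinarith [mul_nonneg (by linarith : (0:ℝ) ≤ (n:ℝ) - 1) (mul_pos hx hy).le]
end

section
/- For every fixed integer d ≥ 1, there is a protocol with exactly 2(d+2) states in which a designated node u (initially in state q₀, all others in state a₀, all edges inactive) stabilizes to having exactly 2^d active neighbors: u first activates edges to 2 nodes placing them in state a₁, and thereafter each interaction of u with an a_i-neighbor (i < d) over an active edge converts it to a_{i+1} and causes u to recruit one new a_{i+1} neighbor, doubling the count of level-(i+1) neighbors until all 2^d neighbors are in state a_d. -/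
/-- A network constructor (NET) protocol: an initial node-state and a transition
function taking the states of two interacting nodes and of the edge joining them
to their updated states. -/
structure NET (Q : Type) where
  init : Q
  rule : Q → Q → Bool → Q × Q × Bool

namespace NET

variable {Q : Type}

/-- A configuration on `n` nodes: a node-state for every node and a (symmetrically
stored) Boolean edge-state for every pair of nodes. -/
def Config (Q : Type) (n : ℕ) : Type := (Fin n → Q) × (Fin n → Fin n → Bool)

/-- One interaction step: the scheduled ordered pair `(u, v)` (if `u ≠ v`) updates
its node-states and the state of the edge `uv` according to the protocol's rule. -/
def step (P : NET Q) {n : ℕ} (C : Config Q n) (u v : Fin n) : Config Q n :=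
  if u = v then C
  else
    let r := P.rule (C.1 u) (C.1 v) (C.2 u v || C.2 v u)
    ⟨fun w => if w = u then r.1 else if w = v then r.2.1 else C.1 w,
     fun w x => if (w = u ∧ x = v) ∨ (w = v ∧ x = u) then r.2.2 else C.2 w x⟩

/-- The execution of protocol `P` from configuration `C0` under schedule `sched`. -/
def run (P : NET Q) {n : ℕ} (C0 : Config Q n) (sched : ℕ → Fin n × Fin n) : ℕ → Config Q n
  | 0 => C0
  | t + 1 => P.step (P.run C0 sched t) (sched t).1 (sched t).2

/-- The initial configuration: every node in the initial state, every edge inactive. -/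
def initC (P : NET Q) (n : ℕ) : Config Q n := ⟨fun _ => P.init, fun _ _ => false⟩

/-- Two distinct nodes are adjacent when the edge joining them is active. -/
def adj {n : ℕ} (C : Config Q n) (u v : Fin n) : Prop :=
  u ≠ v ∧ (C.2 u v = true ∨ C.2 v u = true)

open Classical in
/-- The active degree of a node. -/
noncomputable def deg {n : ℕ} (C : Config Q n) (u : Fin n) : ℕ :=
  (Finset.univ.filter (fun v => adj C u v)).card

/-- The active (output) network is connected. -/
def ConnectedCfg {n : ℕ} (C : Config Q n) : Prop :=
  ∀ u v : Fin n, Relation.ReflTransGen (adj C) u v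

/-- The active network is a spanning line: connected, with exactly 2 nodes of
active degree 1 and all remaining nodes of active degree 2. -/
def IsSpanningLine {n : ℕ} (C : Config Q n) : Prop :=
  ConnectedCfg C ∧
    (Finset.univ.filter (fun v => deg C v = 1)).card = 2 ∧
    ∀ v : Fin n, deg C v = 1 ∨ deg C v = 2

/-- The active network is a spanning ring: connected and every node has degree 2. -/
def IsSpanningRing {n : ℕ} (C : Config Q n) : Prop :=
  ConnectedCfg C ∧ ∀ v : Fin n, deg C v = 2

/-- The active network is a spanning star centered at some node. -/
def IsSpanningStar {n : ℕ} (C : Config Q n) : Prop :=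
  ∃ ctr : Fin n, (∀ v : Fin n, adj C ctr v ↔ v ≠ ctr) ∧
    ∀ u v : Fin n, adj C u v → u = ctr ∨ v = ctr

/-- The output (active) network never changes from time `t` on. -/
def outputStableAt (P : NET Q) {n : ℕ} (C0 : Config Q n) (sched : ℕ → Fin n × Fin n)
    (t : ℕ) : Prop :=
  ∀ t', t ≤ t' → ∀ u v : Fin n,
    adj (P.run C0 sched t') u v ↔ adj (P.run C0 sched t) u v

/-- The running time: the first moment from which the output network stays unchanged. -/
noncomputable def runtime (P : NET Q) {n : ℕ} (C0 : Config Q n)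
    (sched : ℕ → Fin n × Fin n) : ℕ :=
  sInf {t | P.outputStableAt C0 sched t}

/-- A schedule is fair if every ordered pair of distinct nodes occurs infinitely often. -/
def Fair {n : ℕ} (sched : ℕ → Fin n × Fin n) : Prop :=
  ∀ p : Fin n × Fin n, p.1 ≠ p.2 → ∀ t, ∃ k, t ≤ k ∧ sched k = p
end NET

/-!
Give the controller in state `q_s` (`s ≤ d`) a debt of `2^(d-s)` and the controller in `q` none,
and give an agent in state `a_i` (`i ≥ 1`) the weight `2^(d-i)`. Every rule conserves the sum of
the weights of the two interacting nodes, so the total weight stays `2^d`. Every rule that fires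
raises the level of one agent, so a fair execution reaches a configuration on which every
interaction is trivial. There the controller is in `q`: otherwise it has recruited fewer than
`2^d ≤ n - 1` agents and an unrecruited one would still react. And every recruited agent has
reached `a_d`, of weight `1`. Hence exactly `2^d` agents are recruited, and these are the active
neighbours of the controller.
-/

open Finset in
theorem Fintype.sum_add_pair_eq_sum_add_pair {ι M : Type*} [Fintype ι] [DecidableEq ι]
    [AddCommMonoid M] {f g : ι → M} {u v : ι} (huv : u ≠ v)
    (h : ∀ a, a ≠ u → a ≠ v → f a = g a) :
    ∑ a, f a + (g u + g v) = ∑ a, g a + (f u + f v) := by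
  have hout : ∑ a ∈ {u, v}ᶜ, f a = ∑ a ∈ {u, v}ᶜ, g a :=
    Finset.sum_congr rfl fun a ha => by
      simp only [mem_compl, mem_insert, mem_singleton, not_or] at ha
      exact h a ha.1 ha.2
  rw [← sum_add_sum_compl {u, v} f, ← sum_add_sum_compl {u, v} g, sum_pair huv, sum_pair huv,
    hout]
  abel

theorem exists_forall_ge_eq_of_eq_or_lt {α : Type*} (R : ℕ → α) (μ : α → ℕ)
    (h : ∀ t, R (t + 1) = R t ∨ μ (R (t + 1)) < μ (R t)) :
    ∃ t₀, ∀ t ≥ t₀, R t = R t₀ := by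
  have hanti : Antitone (μ ∘ R) :=
    antitone_nat_of_succ_le fun t => (h t).elim (fun e => (congrArg μ e).le) le_of_lt
  obtain ⟨t₀, ht₀⟩ := WellFoundedLT.antitone_chain_condition hanti
  refine ⟨t₀, fun t ht => ?_⟩
  induction t, ht using Nat.le_induction with
  | base => rfl
  | succ t ht ih =>
    rcases h t with e | hlt
    · rw [e, ih]
    · exact absurd ((ht₀ t ht).symm.trans (ht₀ (t + 1) (by omega))) hlt.ne'

namespace NET

variable {Q : Type} (P : NET Q) {n : ℕ}

theorem step_self (C : Config Q n) (u : Fin n) : P.step C u u = C := by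
  simp [step]

theorem step_eq_self_of_rule_eq {C : Config Q n} {u v : Fin n} (hsymm : C.2 u v = C.2 v u)
    (h : P.rule (C.1 u) (C.1 v) (C.2 u v || C.2 v u) = (C.1 u, C.1 v, C.2 u v || C.2 v u)) :
    P.step C u v = C := by
  by_cases huv : u = v
  · exact huv ▸ P.step_self C u
  simp only [step, huv, ↓reduceIte, h]
  refine Prod.ext (funext fun w => ?_) (funext fun w => funext fun x => ?_)
  · dsimp only
    split_ifs <;> subst_vars <;> rfl
  · dsimp only
    split_ifs with hc
    · rcases hc with ⟨rfl, rfl⟩ | ⟨rfl, rfl⟩ <;> simp [hsymm]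
    · rfl

theorem rule_snd_fst_eq_of_step_eq_self {C : Config Q n} {u v : Fin n} (huv : u ≠ v)
    (h : P.step C u v = C) :
    (P.rule (C.1 u) (C.1 v) (C.2 u v || C.2 v u)).2.1 = C.1 v := by
  have := congrArg (fun C => C.1 v) h
  simpa [step, huv, Ne.symm huv] using this

theorem sum_step_add {M : Type*} [AddCommMonoid M] (μ : Q → M) (C : Config Q n) {u v : Fin n}
    (huv : u ≠ v) :
    ∑ a, μ ((P.step C u v).1 a) + (μ (C.1 u) + μ (C.1 v)) =
      ∑ a, μ (C.1 a) + (μ (P.rule (C.1 u) (C.1 v) (C.2 u v || C.2 v u)).1 +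
        μ (P.rule (C.1 u) (C.1 v) (C.2 u v || C.2 v u)).2.1) := by
  have hu : (P.step C u v).1 u = (P.rule (C.1 u) (C.1 v) (C.2 u v || C.2 v u)).1 := by
    simp [step, huv]
  have hv : (P.step C u v).1 v = (P.rule (C.1 u) (C.1 v) (C.2 u v || C.2 v u)).2.1 := by
    simp [step, huv, Ne.symm huv]
  rw [← hu, ← hv]
  exact Fintype.sum_add_pair_eq_sum_add_pair (f := fun a => μ ((P.step C u v).1 a))
    (g := fun a => μ (C.1 a)) huv fun a hau hav => by simp [step, huv, hau, hav]

theorem sum_step_eq {M : Type*} [AddCancelCommMonoid M] (μ : Q → M)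
    (hμ : ∀ x y b, μ (P.rule x y b).1 + μ (P.rule x y b).2.1 = μ x + μ y)
    (C : Config Q n) (u v : Fin n) :
    ∑ a, μ ((P.step C u v).1 a) = ∑ a, μ (C.1 a) := by
  by_cases huv : u = v
  · rw [huv, step_self]
  have := P.sum_step_add μ C huv
  rwa [hμ, add_left_inj] at this

theorem step_eq_self_or_sum_lt (μ : Q → ℕ)
    (hμ : ∀ x y b,
      P.rule x y b = (x, y, b) ∨ μ (P.rule x y b).1 + μ (P.rule x y b).2.1 < μ x + μ y)
    {C : Config Q n} (hsymm : ∀ a b, C.2 a b = C.2 b a) (u v : Fin n) :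
    P.step C u v = C ∨ ∑ a, μ ((P.step C u v).1 a) < ∑ a, μ (C.1 a) := by
  by_cases huv : u = v
  · exact .inl (huv ▸ P.step_self C u)
  rcases hμ (C.1 u) (C.1 v) (C.2 u v || C.2 v u) with hr | hlt
  · exact .inl (P.step_eq_self_of_rule_eq (hsymm u v) hr)
  · have := P.sum_step_add μ C huv
    exact .inr (by omega)

theorem step_run_eq_self_of_fair {C₀ : Config Q n} {sched : ℕ → Fin n × Fin n}
    (hfair : Fair sched) {t₀ : ℕ} (hconst : ∀ t ≥ t₀, P.run C₀ sched t = P.run C₀ sched t₀)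
    (u v : Fin n) :
    P.step (P.run C₀ sched t₀) u v = P.run C₀ sched t₀ := by
  by_cases huv : u = v
  · exact huv ▸ P.step_self _ u
  obtain ⟨k, hk, hsk⟩ := hfair (u, v) huv t₀
  have hrun : P.run C₀ sched (k + 1) = P.step (P.run C₀ sched k) u v := by
    simp [run, hsk]
  rw [← hconst k hk, ← hrun, hconst (k + 1) (by omega), hconst k hk]

theorem exists_quiescent_run {C₀ : Config Q n} {sched : ℕ → Fin n × Fin n}
    (hfair : Fair sched) (I : Config Q n → Prop) (μ : Config Q n → ℕ) (h₀ : I C₀)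
    (hstep : ∀ C, I C → ∀ u v,
      I (P.step C u v) ∧ (P.step C u v = C ∨ μ (P.step C u v) < μ C)) :
    ∃ t₀, (∀ t ≥ t₀, P.run C₀ sched t = P.run C₀ sched t₀) ∧ I (P.run C₀ sched t₀) ∧
      ∀ u v, P.step (P.run C₀ sched t₀) u v = P.run C₀ sched t₀ := by
  have hI : ∀ t, I (P.run C₀ sched t) := fun t => by
    induction t with
    | zero => exact h₀
    | succ t ih => exact (hstep _ ih _ _).1
  obtain ⟨t₀, hconst⟩ := exists_forall_ge_eq_of_eq_or_lt (P.run C₀ sched) μ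
    fun t => (hstep _ (hI t) _ _).2
  exact ⟨t₀, hconst, hI t₀, P.step_run_eq_self_of_fair hfair hconst⟩

end NET

namespace TwoPowDegree

open NET

/-- The controller state `q_s` is `inl s`, with `q₀ = q_0`, `q₀' = q_1` and `q = q_{d+1}`; the agent
state `a_i` is `inr i`, and `a_{d+1}` is never used. The rule for `q₀'` is the case `j = 1` of the
rule for `q_j`. -/
abbrev State (d : ℕ) := Fin (d + 2) ⊕ Fin (d + 2)

def rule (d : ℕ) : State d → State d → Bool → State d × State d × Bool
  | .inl s, .inr i, false =>
      if i = 0 ∧ s = 0 then (.inl 1, .inr 1, true)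
      else if i = 0 ∧ s ≠ Fin.last (d + 1) then (.inl (Fin.last (d + 1)), .inr s, true)
      else (.inl s, .inr i, false)
  | .inl s, .inr i, true =>
      if s = Fin.last (d + 1) ∧ i ≠ 0 ∧ (i : ℕ) < d then (.inl (i + 1), .inr (i + 1), true)
      else (.inl s, .inr i, true)
  | x, y, b => (x, y, b)

def protocol (d : ℕ) : NET (State d) := ⟨.inr 0, rule d⟩

def weight (d : ℕ) : State d → ℕ
  | .inl s => if s = Fin.last (d + 1) then 0 else 2 ^ (d - s)
  | .inr i => if i = 0 then 0 else 2 ^ (d - i)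

def rank (d : ℕ) : State d → ℕ
  | .inl _ => 0
  | .inr i => d + 1 - i

def recruited {d : ℕ} : State d → Bool
  | .inl _ => false
  | .inr i => decide (i ≠ 0)

theorem rule_inr (d : ℕ) (i : Fin (d + 2)) (y : State d) (b : Bool) :
    rule d (.inr i) y b = (.inr i, y, b) := by
  cases y <;> cases b <;> rfl

theorem rule_inl_inl (d : ℕ) (s s' : Fin (d + 2)) (b : Bool) :
    rule d (.inl s) (.inl s') b = (.inl s, .inl s', b) := by
  cases b <;> rfl

variable {d : ℕ}

theorem val_add_one_of_lt {i : Fin (d + 2)} (h : (i : ℕ) < d) :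
    ((i + 1 : Fin (d + 2)) : ℕ) = i + 1 :=
  Fin.val_add_one_of_lt' (by omega)

theorem weight_rule (hd : 1 ≤ d) (x y : State d) (b : Bool) :
    weight d (rule d x y b).1 + weight d (rule d x y b).2.1 = weight d x + weight d y := by
  rcases x with s | i
  · rcases y with s' | i
    · rw [rule_inl_inl]
    cases b <;> simp only [rule]
    · split_ifs with h₀ h₁
      · have : (1 : Fin (d + 2)) ≠ Fin.last (d + 1) := by simp [Fin.ext_iff]; omega
        simp [weight, h₀, this, Nat.two_pow_pred_add_two_pow_pred (by omega : 0 < d)]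
      · simp [weight, h₁, show s ≠ 0 by tauto]
      · rfl
    · split_ifs with h
      · obtain ⟨rfl, hi₀, hid⟩ := h
        have h₁ : (i + 1 : Fin (d + 2)) ≠ Fin.last (d + 1) :=
          Fin.ne_of_val_ne (by rw [val_add_one_of_lt hid, Fin.val_last]; omega)
        have h₂ : (i + 1 : Fin (d + 2)) ≠ 0 :=
          Fin.ne_of_val_ne (by rw [val_add_one_of_lt hid]; simp)
        simp only [weight, h₁, h₂, hi₀, if_true, if_false, val_add_one_of_lt hid, zero_add]
        exact Nat.two_pow_pred_add_two_pow_pred (by omega : 0 < d - i)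
      · rfl
  · rw [rule_inr]

theorem rule_eq_or_rank_lt (x y : State d) (b : Bool) :
    rule d x y b = (x, y, b) ∨
      rank d (rule d x y b).1 + rank d (rule d x y b).2.1 < rank d x + rank d y := by
  rcases x with s | i
  · rcases y with s' | i
    · exact .inl (rule_inl_inl d s s' b)
    cases b <;> simp only [rule]
    · split_ifs with h₀ h₁
      · right; simp [rank, h₀.1]
      · have : (s : ℕ) ≠ 0 := fun h => by simp_all [Fin.ext_iff]
        right; simp [rank, h₁.1]; omega
      · exact .inl rfl
    · split_ifs with h
      · right; simp [rank, val_add_one_of_lt h.2.2]; omega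
      · exact .inl rfl
  · exact .inl (rule_inr d i y b)

theorem recruited_inr {i : Fin (d + 2)} (hi : i ≠ 0) : recruited (.inr i) = true :=
  decide_eq_true hi

theorem rule_inl_inr (s i : Fin (d + 2)) :
    ∃ s' i', rule d (.inl s) (.inr i) (recruited (.inr i)) =
      (.inl s', .inr i', recruited (.inr i')) := by
  by_cases hi : i = 0
  · subst hi
    rw [show recruited (.inr (0 : Fin (d + 2))) = false from rfl]
    simp only [rule, true_and]
    split_ifs with h₀ h₁
    · exact ⟨1, 1, by rw [recruited_inr one_ne_zero]⟩
    · exact ⟨_, s, by rw [recruited_inr h₀]⟩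
    · exact ⟨s, 0, rfl⟩
  · rw [recruited_inr hi]
    simp only [rule]
    split_ifs with h
    · have : i + 1 ≠ 0 := Fin.ne_of_val_ne (by rw [val_add_one_of_lt h.2.2]; simp)
      exact ⟨_, i + 1, by rw [recruited_inr this]⟩
    · exact ⟨s, i, by rw [recruited_inr hi]⟩

theorem eq_last_of_rule_snd_eq {s : Fin (d + 2)}
    (h : (rule d (.inl s) (.inr 0) false).2.1 = .inr 0) : s = Fin.last (d + 1) := by
  simp only [rule, true_and] at h
  split_ifs at h with h₀ h₁
  · simp at h
  · simp_all
  · simpa using h₁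

theorem le_of_rule_snd_eq {i : Fin (d + 2)} (hi : i ≠ 0)
    (h : (rule d (.inl (Fin.last (d + 1))) (.inr i) true).2.1 = .inr i) : d ≤ i := by
  simp only [rule, true_and] at h
  split_ifs at h with h'
  · have := congrArg Fin.val (Sum.inr_injective h)
    rw [val_add_one_of_lt h'.2] at this
    omega
  · exact not_lt.mp fun hid => h' ⟨hi, hid⟩

theorem one_le_weight_of_recruited {x : State d} (hx : recruited x = true) : 1 ≤ weight d x := by
  rcases x with s | i
  · simp [recruited] at hx
  · simp only [recruited, ne_eq, decide_eq_true_eq] at hx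
    simpa [weight, hx] using Nat.one_le_two_pow

open Finset

variable {n : ℕ}

def links (u₀ : Fin n) (x : Fin n → State d) (a b : Fin n) : Bool :=
  (a = u₀ && recruited (x b)) || (b = u₀ && recruited (x a))

structure IsStar (u₀ : Fin n) (C : Config (State d) n) : Prop where
  isLeft_iff : ∀ v, (C.1 v).isLeft ↔ v = u₀
  snd_eq : C.2 = links u₀ C.1

namespace IsStar

variable {u₀ : Fin n} {C : Config (State d) n}

theorem snd_comm (h : IsStar u₀ C) (a b : Fin n) : C.2 a b = C.2 b a := by
  rw [h.snd_eq]
  exact Bool.or_comm _ _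

theorem exists_center_eq (h : IsStar u₀ C) : ∃ s, C.1 u₀ = .inl s := by
  have := (h.isLeft_iff u₀).2 rfl
  cases hx : C.1 u₀ <;> simp_all

theorem exists_eq_inr (h : IsStar u₀ C) {v : Fin n} (hv : v ≠ u₀) : ∃ i, C.1 v = .inr i := by
  have := mt (h.isLeft_iff v).1 hv
  cases hx : C.1 v <;> simp_all

theorem recruited_center (h : IsStar u₀ C) : recruited (C.1 u₀) = false := by
  obtain ⟨s, hs⟩ := h.exists_center_eq
  rw [hs]
  rfl

theorem snd_center (h : IsStar u₀ C) (v : Fin n) : C.2 u₀ v = recruited (C.1 v) := by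
  rw [h.snd_eq]
  by_cases hv : v = u₀
  · simp [links, hv, h.recruited_center]
  · simp [links, hv]

theorem step (h : IsStar u₀ C) (u v : Fin n) : IsStar u₀ ((protocol d).step C u v) := by
  by_cases huv : u = v
  · rwa [huv, step_self]
  rcases hu : C.1 u with s | i
  swap
  · have hr : rule d (C.1 u) (C.1 v) (C.2 u v || C.2 v u) =
        (C.1 u, C.1 v, C.2 u v || C.2 v u) := by
      rw [hu]
      exact rule_inr d i _ _
    rwa [(protocol d).step_eq_self_of_rule_eq (h.snd_comm u v) hr]
  obtain rfl : u = u₀ := (h.isLeft_iff u).1 (by simp [hu])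
  rcases hv : C.1 v with s₁ | i
  · exact absurd ((h.isLeft_iff v).1 (by simp [hv])).symm huv
  obtain ⟨s', i', hr⟩ := rule_inl_inr s i
  have hb : (C.2 u v || C.2 v u) = recruited (.inr i) := by
    rw [h.snd_comm v u, Bool.or_self, h.snd_center, hv]
  have hfst : ((protocol d).step C u v).1 =
      fun w => if w = u then .inl s' else if w = v then .inr i' else C.1 w := by
    simp [NET.step, huv, protocol, hu, hv, hb, hr]
  have hsnd : ((protocol d).step C u v).2 = fun a b =>
      if (a = u ∧ b = v) ∨ (a = v ∧ b = u) then recruited (.inr i') else C.2 a b := by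
    simp [NET.step, huv, protocol, hu, hv, hb, hr]
  constructor
  · intro w
    rw [hfst]
    by_cases hwu : w = u <;> by_cases hwv : w = v <;> simp_all [h.isLeft_iff w]
  · rw [hsnd, hfst, h.snd_eq]
    funext a b
    by_cases hau : a = u <;> by_cases hav : a = v <;> by_cases hbu : b = u <;>
      by_cases hbv : b = v <;> simp_all [links, recruited]

theorem deg_center (h : IsStar u₀ C) : deg C u₀ = #{v | recruited (C.1 v)} := by
  classical
  refine congrArg card (filter_congr fun v _ => ?_)
  by_cases hv : v = u₀
  · simp [adj, hv, h.recruited_center]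
  · simp [adj, Ne.symm hv, h.snd_comm v u₀, h.snd_center]

theorem card_recruited_add_weight_le (h : IsStar u₀ C) :
    #{v | recruited (C.1 v)} + weight d (C.1 u₀) ≤ ∑ v, weight d (C.1 v) := by
  have hsub : ({v | recruited (C.1 v)} : Finset (Fin n)) ⊆ univ.erase u₀ := fun v hv =>
    mem_erase.2 ⟨fun e => by simp [e, h.recruited_center] at hv, mem_univ v⟩
  calc #{v | recruited (C.1 v)} + weight d (C.1 u₀)
      = ∑ v ∈ {v | recruited (C.1 v)}, 1 + weight d (C.1 u₀) := by rw [card_eq_sum_ones]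
    _ ≤ ∑ v ∈ {v | recruited (C.1 v)}, weight d (C.1 v) + weight d (C.1 u₀) := by
      gcongr with v hv
      exact one_le_weight_of_recruited (mem_filter.1 hv).2
    _ ≤ ∑ v ∈ univ.erase u₀, weight d (C.1 v) + weight d (C.1 u₀) := by
      gcongr
    _ = ∑ v, weight d (C.1 v) := sum_erase_add _ _ (mem_univ u₀)

theorem rule_snd_eq_of_step_eq_self (h : IsStar u₀ C) {v : Fin n} {i : Fin (d + 2)}
    (hv : C.1 v = .inr i) (hq : (protocol d).step C u₀ v = C) :
    (rule d (C.1 u₀) (.inr i) (recruited (.inr i))).2.1 = .inr i := by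
  have hne : u₀ ≠ v := fun e => by simpa [hv] using (h.isLeft_iff v).2 e.symm
  have := (protocol d).rule_snd_fst_eq_of_step_eq_self hne hq
  rwa [h.snd_comm v u₀, Bool.or_self, h.snd_center, hv] at this

theorem center_eq_last (h : IsStar u₀ C) (hn : 2 ^ d + 1 ≤ n)
    (hw : ∑ v, weight d (C.1 v) = 2 ^ d) (hq : ∀ v, (protocol d).step C u₀ v = C) :
    C.1 u₀ = .inl (Fin.last (d + 1)) := by
  obtain ⟨s, hs⟩ := h.exists_center_eq
  rw [hs]
  by_contra hlast
  replace hlast : s ≠ Fin.last (d + 1) := fun e => hlast (by rw [e])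
  have hall : univ.erase u₀ ⊆ ({v | recruited (C.1 v)} : Finset (Fin n)) := fun v hv => by
    obtain ⟨i, hi⟩ := h.exists_eq_inr (ne_of_mem_erase hv)
    have hi₀ : i ≠ 0 := by
      rintro rfl
      have := h.rule_snd_eq_of_step_eq_self hi (hq v)
      rw [hs] at this
      exact hlast (eq_last_of_rule_snd_eq this)
    simpa [hi] using recruited_inr hi₀
  have hcard := card_le_card hall
  have hweight : 1 ≤ weight d (C.1 u₀) := by
    rw [hs]
    simpa [weight, hlast] using Nat.one_le_two_pow
  have := h.card_recruited_add_weight_le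
  simp only [card_erase_of_mem (mem_univ u₀), card_univ, Fintype.card_fin] at hcard
  omega

theorem deg_center_eq (h : IsStar u₀ C) (hn : 2 ^ d + 1 ≤ n)
    (hw : ∑ v, weight d (C.1 v) = 2 ^ d) (hq : ∀ v, (protocol d).step C u₀ v = C) :
    deg C u₀ = 2 ^ d := by
  have hlast := h.center_eq_last hn hw hq
  have hweight : ∀ v, weight d (C.1 v) = if recruited (C.1 v) then 1 else 0 := by
    intro v
    by_cases hv : v = u₀
    · simp [hv, hlast, weight, recruited]
    obtain ⟨i, hi⟩ := h.exists_eq_inr hv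
    by_cases hi₀ : i = 0
    · simp [hi, hi₀, weight, recruited]
    have := h.rule_snd_eq_of_step_eq_self hi (hq v)
    rw [hlast, recruited_inr hi₀] at this
    simp [hi, hi₀, weight, recruited, Nat.sub_eq_zero_of_le (le_of_rule_snd_eq hi₀ this)]
  rw [h.deg_center, ← hw, card_filter]
  exact sum_congr rfl fun v _ => (hweight v).symm

end IsStar

theorem isStar_initial (u₀ : Fin n) :
    IsStar u₀ ((fun w => if w = u₀ then .inl 0 else .inr 0, fun _ _ => false) :
      Config (State d) n) where
  isLeft_iff v := by by_cases hv : v = u₀ <;> simp [hv]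
  snd_eq := by
    funext a b
    by_cases ha : a = u₀ <;> by_cases hb : b = u₀ <;> simp [links, recruited, ha, hb]

theorem sum_weight_initial (u₀ : Fin n) :
    ∑ w, weight d (if w = u₀ then .inl 0 else .inr 0) = 2 ^ d := by
  have : (0 : Fin (d + 2)) ≠ Fin.last (d + 1) := Fin.ne_of_val_ne (by simp)
  rw [Fintype.sum_eq_single u₀ fun w hw => by simp [hw, weight]]
  simp [weight, this]

end TwoPowDegree

/-- For every fixed `d ≥ 1` there is a protocol with exactly `2(d+2)` states such that,
starting from a designated node `u` in state `q₀`, all other nodes in state `a₀`, and all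
edges inactive, under every fair schedule the execution stabilizes with `u` having
exactly `2^d` active neighbors. -/
theorem degree_two_pow_with_linear_states (d : ℕ) (hd : 1 ≤ d) :
    ∃ (Q : Type) (_ : Fintype Q) (P : NET Q) (q₀ a₀ : Q),
      Fintype.card Q = 2 * (d + 2) ∧
      ∀ (n : ℕ) (hn : 2 ^ d + 1 ≤ n),
        ∀ sched : ℕ → Fin n × Fin n, NET.Fair sched →
          ∃ t : ℕ, ∀ t', t ≤ t' →
            NET.deg
              (P.run
                ⟨fun w => if w = (⟨0, Nat.lt_of_lt_of_le (Nat.succ_pos _) hn⟩ : Fin n)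
                    then q₀ else a₀,
                  fun _ _ => false⟩
                sched t')
              (⟨0, Nat.lt_of_lt_of_le (Nat.succ_pos _) hn⟩ : Fin n) = 2 ^ d := by
  open TwoPowDegree in
  refine ⟨State d, inferInstance, protocol d, .inl 0, .inr 0, by simp; ring,
    fun n hn sched hfair => ?_⟩
  set u₀ : Fin n := ⟨0, Nat.lt_of_lt_of_le (Nat.succ_pos _) hn⟩
  obtain ⟨t₀, hconst, ⟨hstar, hw⟩, hq⟩ := (protocol d).exists_quiescent_run hfair
    (fun C => IsStar u₀ C ∧ ∑ v, weight d (C.1 v) = 2 ^ d) (fun C => ∑ v, rank d (C.1 v))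
    ⟨isStar_initial u₀, sum_weight_initial u₀⟩ fun C ⟨hC, hw⟩ u v =>
      ⟨⟨hC.step u v, ((protocol d).sum_step_eq _ (weight_rule hd) C u v).trans hw⟩,
        (protocol d).step_eq_self_or_sum_lt _ rule_eq_or_rank_lt hC.snd_comm u v⟩
  refine ⟨t₀, fun t ht => ?_⟩
  rw [hconst t ht]
  exact hstar.deg_center_eq hn hw (hq u₀)
end
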